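/- arXiv:1409.1730 — 13 statements merged into one kernel-verified Lean document; each statement's English description precedes it below -/
import Mathlib

section
/- For every integer n with 1 ≤ n ≤ N, the function Φ(n) = C·(N−n) + H·∑_{j=2}^{n} v(j) satisfies Φ(n) − Φ(n−1) = H·v(n) − C; that is, the change of Φ under a unilateral deviation of one node from investing to not investing (raising the number of non-investors from n−1 to n) equals the change of that node's own cost, so Φ is a potential function for the protection game on the complete graph K_N. -/
open Finset

theorem Finset.sum_Icc_two_eq_sum_Icc_two_pred_add {M : Type*} [AddCommMonoid M] (f : ℕ → M)
    (hf : f 1 = 0) {n : ℕ} (hn : 1 ≤ n) :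
    ∑ j ∈ Icc 2 n, f j = ∑ j ∈ Icc 2 (n - 1), f j + f n := by
  obtain ⟨m, rfl⟩ := Nat.exists_eq_add_of_le' hn
  rcases Nat.eq_zero_or_pos m with rfl | hm
  · simp [hf]
  · simpa using sum_Icc_succ_top (show 2 ≤ m + 1 by omega) f

theorem stmt_0_general (τ C H : ℝ)
    (N : ℕ)
    (v : ℕ → ℝ)
    (hv : ∀ n : ℕ, v n = if 2 ≤ n ∧ 1 ≤ τ * ((n : ℝ) - 1)
      then 1 - 1 / (τ * ((n : ℝ) - 1)) else 0)
    (Φ : ℕ → ℝ)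
    (hΦ : ∀ n : ℕ, Φ n = C * ((N : ℝ) - (n : ℝ)) + H * ∑ j ∈ Finset.Icc 2 n, v j)
    (n : ℕ) (h1 : 1 ≤ n) :
    Φ n - Φ (n - 1) = H * v n - C := by
  have hv1 : v 1 = 0 := by simp [hv]
  rw [hΦ, hΦ, sum_Icc_two_eq_sum_Icc_two_pred_add v hv1 h1, Nat.cast_sub h1]
  push_cast
  ring

/-- Φ(n) = C·(N−n) + H·∑_{j=2}^{n} v(j) is a potential function:
for 1 ≤ n ≤ N, Φ(n) − Φ(n−1) = H·v(n) − C. -/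
theorem stmt_0 (τ C H : ℝ) (hτ : 0 < τ) (hC : 0 < C) (hH : 0 < H)
    (N : ℕ)
    (v : ℕ → ℝ)
    (hv : ∀ n : ℕ, v n = if 2 ≤ n ∧ 1 ≤ τ * ((n : ℝ) - 1)
      then 1 - 1 / (τ * ((n : ℝ) - 1)) else 0)
    (Φ : ℕ → ℝ)
    (hΦ : ∀ n : ℕ, Φ n = C * ((N : ℝ) - (n : ℝ)) + H * ∑ j ∈ Finset.Icc 2 n, v j)
    (n : ℕ) (h1 : 1 ≤ n) (h2 : n ≤ N) :
    Φ n - Φ (n - 1) = H * v n - C :=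
  stmt_0_general τ C H N v hv Φ hΦ n h1
end

section
/- Assume N ≥ 2 and τ > 1/(N−1). If C ≥ H, then n = N is an equilibrium count of non-investors. If 0 < C < H and 1/((1−C/H)·τ) is not an integer, then n* = min{ N, ⌈1/((1−C/H)·τ)⌉ } is the unique integer n ∈ {1,…,N} that is an equilibrium count of non-investors. -/
/-!
Writing `a = 1 / ((1 - C/H) τ)`, the infection cost `H (1 - 1/(τ t))` of a node with `t`
neighbours satisfies `H (1 - 1/(τ t)) - C = (H - C) (t - a) / t`, so a non-investor prefers to
stay unprotected exactly when `t ≤ a`; below the epidemic threshold `t < 1/τ < a` the cost is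
`0`. Hence `n` non-investors are in equilibrium iff `n - 1 ≤ a` and, unless `n = N`, `a ≤ n`.
When `a` is not an integer this pins down `n = min N ⌈a⌉₊`.
-/

/-- The NIMFA infection probability of a node of `K_n`, written in terms of its number
`t = n - 1` of neighbours. -/
noncomputable def infectionProb (τ t : ℝ) : ℝ :=
  if 1 ≤ τ * t then 1 - 1 / (τ * t) else 0

noncomputable def criticalNeighbours (τ C H : ℝ) : ℝ :=
  1 / ((1 - C / H) * τ)

lemma infectionProb_le_one (τ t : ℝ) : infectionProb τ t ≤ 1 := by
  unfold infectionProb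
  split_ifs with h
  · have : 0 < 1 / (τ * t) := by positivity
    linarith
  · exact zero_le_one

section Threshold

variable {τ C H : ℝ} (hτ : 0 < τ) (hC : 0 < C) (hCH : C < H)
include hτ hC hCH

lemma one_div_lt_criticalNeighbours : 1 / τ < criticalNeighbours τ C H := by
  have hH : 0 < H := hC.trans hCH
  have hfrac : 0 < 1 - C / H := by rw [sub_pos, div_lt_one hH]; exact hCH
  exact one_div_lt_one_div_of_lt (mul_pos hfrac hτ)
    (mul_lt_of_lt_one_left hτ (sub_lt_self 1 (div_pos hC hH)))

lemma mul_one_sub_one_div_sub_eq {t : ℝ} (ht : t ≠ 0) :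
    H * (1 - 1 / (τ * t)) - C = (H - C) / t * (t - criticalNeighbours τ C H) := by
  have hH : H ≠ 0 := (hC.trans hCH).ne'
  have hHC : H - C ≠ 0 := sub_ne_zero.mpr hCH.ne'
  have hτ' : τ ≠ 0 := hτ.ne'
  unfold criticalNeighbours
  rw [one_sub_div hH]
  field_simp
  ring

lemma mul_infectionProb_le_iff (t : ℝ) :
    H * infectionProb τ t ≤ C ↔ t ≤ criticalNeighbours τ C H := by
  unfold infectionProb
  split_ifs with h
  · have ht : 0 < t := pos_of_mul_pos_right (one_pos.trans_le h) hτ.le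
    have hk : 0 < (H - C) / t := div_pos (sub_pos.mpr hCH) ht
    rw [← sub_nonpos, mul_one_sub_one_div_sub_eq hτ hC hCH ht.ne', ← mul_zero ((H - C) / t),
      mul_le_mul_iff_right₀ hk, sub_nonpos]
  · have : t < 1 / τ := by rw [lt_div_iff₀ hτ]; linarith
    simp only [mul_zero, hC.le, true_iff]
    exact (this.trans (one_div_lt_criticalNeighbours hτ hC hCH)).le

lemma le_mul_infectionProb_iff (t : ℝ) :
    C ≤ H * infectionProb τ t ↔ criticalNeighbours τ C H ≤ t := by
  unfold infectionProb
  split_ifs with h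
  · have ht : 0 < t := pos_of_mul_pos_right (one_pos.trans_le h) hτ.le
    have hk : 0 < (H - C) / t := div_pos (sub_pos.mpr hCH) ht
    rw [← sub_nonneg, mul_one_sub_one_div_sub_eq hτ hC hCH ht.ne', ← mul_zero ((H - C) / t),
      mul_le_mul_iff_right₀ hk, sub_nonneg]
  · have : t < 1 / τ := by rw [lt_div_iff₀ hτ]; linarith
    simp only [mul_zero, not_le.mpr hC, false_iff, not_le]
    exact this.trans (one_div_lt_criticalNeighbours hτ hC hCH)

end Threshold

lemma two_le_of_one_le_mul_sub_one {τ : ℝ} (hτ : 0 < τ) {n : ℕ} (h : 1 ≤ τ * ((n : ℝ) - 1)) :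
    2 ≤ n := by
  have : (0 : ℝ) < n - 1 := pos_of_mul_pos_right (one_pos.trans_le h) hτ.le
  have : (1 : ℝ) < n := by linarith
  exact_mod_cast this

lemma Nat.sub_one_le_iff_le_ceil {α : Type*} [Ring α] [LinearOrder α] [IsStrictOrderedRing α]
    [FloorSemiring α] {a : α} (ha : ∀ j : ℕ, a ≠ j) {n : ℕ} (hn : 1 ≤ n) :
    (n : α) - 1 ≤ a ↔ n ≤ ⌈a⌉₊ := by
  have hlt : ((n - 1 : ℕ) : α) ≤ a ↔ ((n - 1 : ℕ) : α) < a :=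
    ⟨fun h => h.lt_of_ne (ha _).symm, le_of_lt⟩
  rw [← Nat.cast_one, ← Nat.cast_sub hn, hlt, ← Nat.lt_ceil]
  omega

theorem stmt_1_general (τ C H : ℝ) (hτpos : 0 < τ) (hC : 0 < C) (hH : 0 < H)
    (N : ℕ)
    (v : ℕ → ℝ)
    (hv : ∀ n : ℕ, v n = if 2 ≤ n ∧ 1 ≤ τ * ((n : ℝ) - 1)
      then 1 - 1 / (τ * ((n : ℝ) - 1)) else 0)
    (isEq : ℕ → Prop)
    (hisEq : ∀ n : ℕ, isEq n ↔ (n ≤ N ∧ H * v n ≤ C ∧ (n < N → C ≤ H * v (n + 1)))) :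
    (H ≤ C → isEq N) ∧
    ((C < H ∧ ¬ ∃ k : ℤ, 1 / ((1 - C / H) * τ) = (k : ℝ)) →
      ∀ n : ℕ, 1 ≤ n → n ≤ N →
        (isEq n ↔ n = min N ⌈1 / ((1 - C / H) * τ)⌉₊)) := by
  have hvn (n : ℕ) : v n = infectionProb τ (n - 1) := by
    rw [hv, infectionProb]
    exact if_congr (and_iff_right_of_imp (two_le_of_one_le_mul_sub_one hτpos)) rfl rfl
  constructor
  · intro hHC
    refine (hisEq N).mpr ⟨le_rfl, ?_, fun h => (lt_irrefl N h).elim⟩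
    calc H * v N ≤ H * 1 := by rw [hvn]; gcongr; exact infectionProb_le_one _ _
      _ ≤ C := by rwa [mul_one]
  · rintro ⟨hCH, hnint⟩ n hn -
    have ha (j : ℕ) : criticalNeighbours τ C H ≠ j := fun h =>
      hnint ⟨j, by rw [Int.cast_natCast]; exact h⟩
    have hcost : H * v n ≤ C ↔ n ≤ ⌈criticalNeighbours τ C H⌉₊ := by
      rw [hvn, mul_infectionProb_le_iff hτpos hC hCH, Nat.sub_one_le_iff_le_ceil ha hn]
    have hdeviate : C ≤ H * v (n + 1) ↔ ⌈criticalNeighbours τ C H⌉₊ ≤ n := by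
      rw [hvn, le_mul_infectionProb_iff hτpos hC hCH, Nat.cast_add_one, add_sub_cancel_right,
        Nat.ceil_le]
    show _ ↔ n = min N ⌈criticalNeighbours τ C H⌉₊
    rw [hisEq, hcost, hdeviate]
    omega

/-- equilibrium counts of non-investors in the complete graph K_N.
If C ≥ H then n = N is an equilibrium count; if 0 < C < H and 1/((1−C/H)τ) is not an
integer, then n* = min{N, ⌈1/((1−C/H)τ)⌉} is the unique equilibrium count in {1,…,N}. -/
theorem stmt_1 (τ C H : ℝ) (hτpos : 0 < τ) (hC : 0 < C) (hH : 0 < H)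
    (N : ℕ) (hN : 2 ≤ N) (hτ : 1 / ((N : ℝ) - 1) < τ)
    (v : ℕ → ℝ)
    (hv : ∀ n : ℕ, v n = if 2 ≤ n ∧ 1 ≤ τ * ((n : ℝ) - 1)
      then 1 - 1 / (τ * ((n : ℝ) - 1)) else 0)
    (isEq : ℕ → Prop)
    (hisEq : ∀ n : ℕ, isEq n ↔ (n ≤ N ∧ H * v n ≤ C ∧ (n < N → C ≤ H * v (n + 1)))) :
    (H ≤ C → isEq N) ∧
    ((C < H ∧ ¬ ∃ k : ℤ, 1 / ((1 - C / H) * τ) = (k : ℝ)) →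
      ∀ n : ℕ, 1 ≤ n → n ≤ N →
        (isEq n ↔ n = min N ⌈1 / ((1 - C / H) * τ)⌉₊)) :=
  stmt_1_general τ C H hτpos hC hH N v hv isEq hisEq
end

section
/- Assume C > 0, H > 0, τ > 0 and N ≥ 1 + 1/τ. Define the real-variable social cost S(x) = C·(N−x) for x ∈ [1, 1+1/τ] and S(x) = C·(N−x) + x·H·(1 − 1/(τ(x−1))) for x ∈ (1+1/τ, N]. Then the minimum of S over [1, N] is attained at x = 1 + 1/τ or at x = N, i.e. min_{x∈[1,N]} S(x) = min{ S(1+1/τ), S(N) }. -/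
/-!
Beyond the epidemic threshold `a = 1 + 1/τ` the cost equals
`(H - C) x + C N - H/τ - (H/τ)/(x - 1)`, a concave function of `x`, so on `[a, N]` it is at least
its value at one of the endpoints. Below the threshold the cost `C (N - x)` is decreasing, hence
at least its value at `a`, and both formulas agree at `a` because the infection probability
vanishes there.
-/

open Set

lemma convexOn_inv_sub (c : ℝ) : ConvexOn ℝ (Ioi c) fun x : ℝ => (x - c)⁻¹ := by
  have h := (convexOn_zpow (𝕜 := ℝ) (-1)).translate_left (-c)
  have hs : (fun z => -c + z) ⁻¹' Ioi 0 = Ioi c := by ext; simp [neg_add_eq_sub]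
  rw [hs] at h
  exact h.congr fun x _ => by simp [sub_eq_add_neg]

lemma concaveOn_socialCost {τ C H N : ℝ} (hτ : 0 < τ) (hH : 0 ≤ H) :
    ConcaveOn ℝ (Ioi 1) fun x => C * (N - x) + x * H * (1 - 1 / (τ * (x - 1))) := by
  have hlin : ConcaveOn ℝ (Ioi 1) fun x : ℝ => (H - C) * x + (C * N - H / τ) :=
    (((H - C) • LinearMap.id : ℝ →ₗ[ℝ] ℝ).concaveOn (convex_Ioi 1)).add_const _
  refine (hlin.sub ((convexOn_inv_sub 1).smul (c := H / τ) (by positivity))).congr ?_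
  intro x hx
  have : x - 1 ≠ 0 := (sub_pos.2 hx).ne'
  simp only [Pi.sub_apply, smul_eq_mul]
  field_simp
  ring

/-- the real-variable social cost S on [1,N] attains its minimum
at x = 1 + 1/τ or at x = N; i.e. min{S(1+1/τ), S(N)} is the least value of S on [1,N]. -/
theorem stmt_2 (τ C H : ℝ) (hτ : 0 < τ) (hC : 0 < C) (hH : 0 < H)
    (N : ℝ) (hN : 1 + 1 / τ ≤ N)
    (S : ℝ → ℝ)
    (hS : ∀ x : ℝ, S x = if x ≤ 1 + 1 / τ then C * (N - x)
      else C * (N - x) + x * H * (1 - 1 / (τ * (x - 1)))) :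
    IsLeast (S '' Set.Icc 1 N) (min (S (1 + 1 / τ)) (S N)) := by
  set a := 1 + 1 / τ with ha
  set g : ℝ → ℝ := fun x => C * (N - x) + x * H * (1 - 1 / (τ * (x - 1)))
  have h1a : 1 < a := lt_add_of_pos_right 1 (by positivity)
  have hSa : S a = C * (N - a) := by rw [hS, if_pos le_rfl]
  have hga : g a = S a := by
    rw [hSa]
    simp only [g, ha, add_sub_cancel_left, one_div, mul_inv_cancel₀ hτ.ne', inv_one, sub_self,
      mul_zero, add_zero]
  have hSg : ∀ x, a < x → S x = g x := fun x hx => by rw [hS, if_neg hx.not_ge]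
  refine ⟨?_, ?_⟩
  · rcases min_choice (S a) (S N) with h | h <;> rw [h]
    exacts [mem_image_of_mem S ⟨h1a.le, hN⟩, mem_image_of_mem S ⟨h1a.le.trans hN, le_rfl⟩]
  rintro _ ⟨x, ⟨-, hxN⟩, rfl⟩
  rcases le_or_gt x a with hxa | hax
  · rw [hS x, if_pos hxa]
    exact (min_le_left _ _).trans (hSa.trans_le (by gcongr))
  · rw [hSg x hax, hSg N (hax.trans_le hxN), ← hga]
    exact (concaveOn_socialCost hτ hH.le).min_le_of_mem_Icc h1a (h1a.trans_le hN) ⟨hax.le, hxN⟩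
end

section
/- Assume N ≥ 2, τ > 1/(N−1), C > 0 and H > 0. Set n* = N if C ≥ H and n* = min{ N, ⌈1/((1−C/H)·τ)⌉ } if C < H. Then every integer n^opt ∈ {0,…,N} that minimizes the social cost S(n) = C·(N−n) + n·H·v(n) over {0,…,N} satisfies n^opt ≤ n*; that is, at equilibrium at least as many nodes refrain from investing as at the social optimum. -/
/-!
Removing one non-investor from a group of `n` changes the social cost by
`C - H (n v(n) - (n-1) v(n-1))`. Since `v` is nondecreasing and strictly increasing wherever
it is positive, this is negative as soon as `H v(n) ≥ C` and `n ≥ 2`. Once `n` exceeds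
`⌈1/((1 - C/H) τ)⌉`, the formula for `v` gives `v(n) ≥ C/H`, so such an `n` cannot minimize
the social cost.
-/

noncomputable def nimfaComplete (τ : ℝ) (n : ℕ) : ℝ :=
  if 2 ≤ n ∧ 1 ≤ τ * ((n : ℝ) - 1) then 1 - 1 / (τ * ((n : ℝ) - 1)) else 0

def socialCost (C H : ℝ) (N : ℕ) (v : ℕ → ℝ) (n : ℕ) : ℝ :=
  C * ((N : ℝ) - n) + n * H * v n

theorem two_le_of_nimfaComplete_pos {τ : ℝ} {n : ℕ} (h : 0 < nimfaComplete τ n) :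
    2 ≤ n := by
  unfold nimfaComplete at h
  split_ifs at h with hn
  · exact hn.1
  · exact absurd h (lt_irrefl 0)

theorem nimfaComplete_lt_succ {τ : ℝ} {n : ℕ} (h : 0 < nimfaComplete τ (n + 1)) :
    nimfaComplete τ n < nimfaComplete τ (n + 1) := by
  have hsucc : 2 ≤ n + 1 ∧ 1 ≤ τ * (((n + 1 : ℕ) : ℝ) - 1) := by
    by_contra hc
    simp only [nimfaComplete, if_neg hc, lt_irrefl] at h
  unfold nimfaComplete
  rw [if_pos hsucc]
  split_ifs with hn
  · have hn1 : (1 : ℝ) ≤ n - 1 := by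
      rw [le_sub_iff_add_le]
      exact_mod_cast hn.1
    have hτ : 0 < τ := by nlinarith [hn.2]
    have hlt : τ * ((n : ℝ) - 1) < τ * (((n + 1 : ℕ) : ℝ) - 1) := by
      push_cast
      linarith
    linarith [one_div_lt_one_div_of_lt (zero_lt_one.trans_le hn.2) hlt]
  · rwa [nimfaComplete, if_pos hsucc] at h

theorem le_nimfaComplete_of_ceil_lt {τ c : ℝ} (hτ : 0 < τ) (hc : c < 1) {n : ℕ}
    (hn : ⌈1 / ((1 - c) * τ)⌉₊ < n) : c ≤ nimfaComplete τ n := by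
  have hden : 0 < (1 - c) * τ := mul_pos (sub_pos.2 hc) hτ
  have hceil : 1 / ((1 - c) * τ) ≤ (n : ℝ) - 1 := by
    have h1 : ⌈1 / ((1 - c) * τ)⌉₊ + 1 ≤ n := hn
    have h2 : ((⌈1 / ((1 - c) * τ)⌉₊ + 1 : ℕ) : ℝ) ≤ n := by exact_mod_cast h1
    push_cast at h2
    linarith [Nat.le_ceil (1 / ((1 - c) * τ))]
  have hn2 : 2 ≤ n := by
    have := Nat.ceil_pos.2 (one_div_pos.2 hden)
    omega
  have hkey : 1 ≤ (1 - c) * (τ * ((n : ℝ) - 1)) := by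
    rw [div_le_iff₀ hden] at hceil
    linarith
  have hpos : 0 < τ * ((n : ℝ) - 1) :=
    pos_of_mul_pos_right (zero_lt_one.trans_le hkey) (sub_pos.2 hc).le
  unfold nimfaComplete
  split_ifs with hcond
  · have : 1 / (τ * ((n : ℝ) - 1)) ≤ 1 - c := by
      rw [div_le_iff₀ hpos]
      linarith
    linarith
  · have hτn : τ * ((n : ℝ) - 1) < 1 := by
      by_contra h
      exact hcond ⟨hn2, not_lt.1 h⟩
    nlinarith

theorem socialCost_lt_succ {C H : ℝ} {N : ℕ} {v : ℕ → ℝ} {n : ℕ} (hH : 0 < H)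
    (hn : 0 < n) (hv : v n < v (n + 1)) (hC : C ≤ H * v (n + 1)) :
    socialCost C H N v n < socialCost C H N v (n + 1) := by
  have hgain : 0 < H * (n * (v (n + 1) - v n)) :=
    mul_pos hH (mul_pos (Nat.cast_pos.2 hn) (sub_pos.2 hv))
  unfold socialCost
  push_cast
  linarith

theorem stmt_3_general (τ C H : ℝ) (hτpos : 0 < τ) (hC : 0 < C) (hH : 0 < H)
    (N : ℕ)
    (v : ℕ → ℝ)
    (hv : ∀ n : ℕ, v n = if 2 ≤ n ∧ 1 ≤ τ * ((n : ℝ) - 1)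
      then 1 - 1 / (τ * ((n : ℝ) - 1)) else 0)
    (S : ℕ → ℝ)
    (hS : ∀ n : ℕ, S n = C * ((N : ℝ) - (n : ℝ)) + (n : ℝ) * H * v n)
    (nstar : ℕ)
    (hnstar : nstar = if H ≤ C then N else min N ⌈1 / ((1 - C / H) * τ)⌉₊)
    (nopt : ℕ) (hnoptN : nopt ≤ N)
    (hnopt : ∀ m : ℕ, m ≤ N → S nopt ≤ S m) :
    nopt ≤ nstar := by
  obtain rfl : v = nimfaComplete τ := funext hv
  obtain rfl : S = socialCost C H N (nimfaComplete τ) := funext hS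
  subst hnstar
  split_ifs with hHC
  · exact hnoptN
  refine le_min hnoptN (not_lt.1 fun hlt => ?_)
  have hvC : C / H ≤ nimfaComplete τ nopt :=
    le_nimfaComplete_of_ceil_lt hτpos ((div_lt_one hH).2 (not_le.1 hHC)) hlt
  have hpos : 0 < nimfaComplete τ nopt := (div_pos hC hH).trans_le hvC
  obtain ⟨m, rfl⟩ : ∃ m, nopt = m + 1 := Nat.exists_eq_add_one.2 (by omega)
  have hm : 0 < m := by
    have := two_le_of_nimfaComplete_pos hpos
    omega
  exact (hnopt m (by omega)).not_gt <| socialCost_lt_succ hH hm (nimfaComplete_lt_succ hpos)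
    ((div_le_iff₀' hH).1 hvC)

/-- every social-cost minimizer n^opt satisfies n^opt ≤ n*,
where n* is the equilibrium count of non-investors. -/
theorem stmt_3 (τ C H : ℝ) (hτpos : 0 < τ) (hC : 0 < C) (hH : 0 < H)
    (N : ℕ) (hN : 2 ≤ N) (hτ : 1 / ((N : ℝ) - 1) < τ)
    (v : ℕ → ℝ)
    (hv : ∀ n : ℕ, v n = if 2 ≤ n ∧ 1 ≤ τ * ((n : ℝ) - 1)
      then 1 - 1 / (τ * ((n : ℝ) - 1)) else 0)
    (S : ℕ → ℝ)
    (hS : ∀ n : ℕ, S n = C * ((N : ℝ) - (n : ℝ)) + (n : ℝ) * H * v n)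
    (nstar : ℕ)
    (hnstar : nstar = if H ≤ C then N else min N ⌈1 / ((1 - C / H) * τ)⌉₊)
    (nopt : ℕ) (hnoptN : nopt ≤ N)
    (hnopt : ∀ m : ℕ, m ≤ N → S nopt ≤ S m) :
    nopt ≤ nstar :=
  stmt_3_general τ C H hτpos hC hH N v hv S hS nstar hnstar nopt hnoptN hnopt
end

section
/- Assume N ≥ 2, τ > 1/(N−1), 0 < C < H, and that 1/((1−C/H)·τ) is not an integer, and let n* = min{ N, ⌈1/((1−C/H)·τ)⌉ }. Then the pure-equilibrium social cost is strictly smaller than the symmetric-mixed-equilibrium social cost N·C, i.e. S(n*) = C·(N−n*) + n*·H·v(n*) < N·C. -/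
/-! An infected node pays `H * v n < C` exactly when `(1 - C/H) τ (n - 1) < 1`, and
`n* ≤ ⌈1 / ((1 - C/H) τ)⌉` gives `n* - 1 < 1 / ((1 - C/H) τ)`. So in the pure equilibrium every
unprotected node pays strictly less than `C`, and there is at least one of them. -/

noncomputable def nimfaInfectionProb (τ : ℝ) (n : ℕ) : ℝ :=
  if 2 ≤ n ∧ 1 ≤ τ * ((n : ℝ) - 1) then 1 - 1 / (τ * ((n : ℝ) - 1)) else 0

lemma mul_one_sub_one_div_lt_iff {C H t : ℝ} (hH : 0 < H) (ht : 0 < t) :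
    H * (1 - 1 / t) < C ↔ (1 - C / H) * t < 1 := by
  have hleft : H * (1 - 1 / t) = (H * t - H) / t := by field_simp
  have hright : (1 - C / H) * t = (H * t - C * t) / H := by field_simp
  rw [hleft, hright, div_lt_iff₀ ht, div_lt_iff₀ hH]
  constructor <;> intro h <;> linarith

lemma mul_nimfaInfectionProb_lt {τ C H : ℝ} {n : ℕ} (hC : 0 < C) (hH : 0 < H)
    (h : (1 - C / H) * (τ * ((n : ℝ) - 1)) < 1) : H * nimfaInfectionProb τ n < C := by
  unfold nimfaInfectionProb
  split_ifs with hn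
  · exact (mul_one_sub_one_div_lt_iff hH (one_pos.trans_le hn.2)).2 h
  · simpa using hC

lemma Nat.cast_sub_one_lt_of_le_ceil {a : ℝ} {n : ℕ} (ha : 0 ≤ a) (hn : n ≤ ⌈a⌉₊) :
    (n : ℝ) - 1 < a := by
  have : (n : ℝ) ≤ ⌈a⌉₊ := by exact_mod_cast hn
  linarith [Nat.ceil_lt_add_one ha]

theorem stmt_5_general (τ C H : ℝ) (hτpos : 0 < τ)
    (N : ℕ) (hN : 2 ≤ N)
    (hC : 0 < C) (hCH : C < H)
    (v : ℕ → ℝ)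
    (hv : ∀ n : ℕ, v n = if 2 ≤ n ∧ 1 ≤ τ * ((n : ℝ) - 1)
      then 1 - 1 / (τ * ((n : ℝ) - 1)) else 0)
    (S : ℕ → ℝ)
    (hS : ∀ n : ℕ, S n = C * ((N : ℝ) - (n : ℝ)) + (n : ℝ) * H * v n)
    (nstar : ℕ) (hnstar : nstar = min N ⌈1 / ((1 - C / H) * τ)⌉₊) :
    S nstar < (N : ℝ) * C := by
  have hH : 0 < H := hC.trans hCH
  have hrate : 0 < (1 - C / H) * τ := mul_pos (sub_pos.2 ((div_lt_one hH).2 hCH)) hτpos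
  have hnstar_pos : (0 : ℝ) < nstar := by
    rw [hnstar, Nat.cast_pos]
    exact lt_min (by omega) (Nat.ceil_pos.2 (by positivity))
  have hbelow : (nstar : ℝ) - 1 < 1 / ((1 - C / H) * τ) :=
    Nat.cast_sub_one_lt_of_le_ceil (by positivity) (hnstar ▸ min_le_right _ _)
  have hcost : H * v nstar < C := by
    rw [hv]
    refine mul_nimfaInfectionProb_lt hC hH ?_
    calc (1 - C / H) * (τ * ((nstar : ℝ) - 1)) = ((nstar : ℝ) - 1) * ((1 - C / H) * τ) := by ring
      _ < 1 := (lt_div_iff₀ hrate).1 hbelow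
  rw [hS]
  nlinarith [mul_lt_mul_of_pos_left hcost hnstar_pos]

/-- the pure-equilibrium social cost is strictly smaller than the
symmetric-mixed-equilibrium social cost N·C. -/
theorem stmt_5 (τ C H : ℝ) (hτpos : 0 < τ)
    (N : ℕ) (hN : 2 ≤ N) (hτ : 1 / ((N : ℝ) - 1) < τ)
    (hC : 0 < C) (hCH : C < H)
    (hnotint : ¬ ∃ k : ℤ, 1 / ((1 - C / H) * τ) = (k : ℝ))
    (v : ℕ → ℝ)
    (hv : ∀ n : ℕ, v n = if 2 ≤ n ∧ 1 ≤ τ * ((n : ℝ) - 1)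
      then 1 - 1 / (τ * ((n : ℝ) - 1)) else 0)
    (S : ℕ → ℝ)
    (hS : ∀ n : ℕ, S n = C * ((N : ℝ) - (n : ℝ)) + (n : ℝ) * H * v n)
    (nstar : ℕ) (hnstar : nstar = min N ⌈1 / ((1 - C / H) * τ)⌉₊) :
    S nstar < (N : ℝ) * C :=
  stmt_5_general τ C H hτpos N hN hC hCH v hv S hS nstar hnstar
end

section
/- Assume N ≥ 2, τ > 1/(N−1) and H > 0. If 0 ≤ C < H·(1 − 1/(τ(N−1))), then there exists p* ∈ [0,1] with F(p*) = C; that is, a symmetric mixed Nash equilibrium of the protection game on the complete graph K_N exists. (Here F(0) = H·(1 − 1/(τ(N−1))) and F(1) = 0, and F is continuous on [0,1].) -/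
open Finset

/-- `∑_{n=a}^{m} c n · P(X = n)` for `X ~ Bin(m, 1 - p)`. -/
noncomputable def binomialTailSum (m a : ℕ) (c : ℕ → ℝ) (p : ℝ) : ℝ :=
  ∑ n ∈ Icc a m, c n * (m.choose n : ℝ) * (1 - p) ^ n * p ^ (m - n)

section binomialTailSum

variable (m a : ℕ) (c : ℕ → ℝ)

theorem continuous_binomialTailSum : Continuous (binomialTailSum m a c) := by
  unfold binomialTailSum
  fun_prop

variable {m a}

theorem binomialTailSum_one (ha : 1 ≤ a) : binomialTailSum m a c 1 = 0 := by
  refine sum_eq_zero fun n hn => ?_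
  have hn0 : n ≠ 0 := by grind
  simp [zero_pow hn0]

theorem binomialTailSum_zero (ha : a ≤ m) : binomialTailSum m a c 0 = c m := by
  rw [binomialTailSum, sum_eq_single_of_mem m (mem_Icc.mpr ⟨ha, le_rfl⟩)]
  · simp
  · intro n hn hnm
    have : m - n ≠ 0 := by grind
    simp [zero_pow this]

end binomialTailSum

theorem one_le_natCeil_one_div {τ : ℝ} (hτ : 0 < τ) : 1 ≤ ⌈1 / τ⌉₊ :=
  Nat.one_le_ceil_iff.mpr (by positivity)

theorem natCeil_one_div_le {τ : ℝ} {k : ℕ} (hk : 0 < k) (hτ : 1 / (k : ℝ) < τ) :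
    ⌈1 / τ⌉₊ ≤ k := by
  have hk' : (0 : ℝ) < k := by exact_mod_cast hk
  exact Nat.ceil_le.mpr ((one_div_lt ((one_div_pos.mpr hk').trans hτ) hk').mpr hτ).le

theorem stmt_6_general (τ C H : ℝ) (hτpos : 0 < τ)
    (N : ℕ) (hN : 2 ≤ N) (hτ : 1 / ((N : ℝ) - 1) < τ)
    (F : ℝ → ℝ)
    (hF : ∀ p : ℝ, F p = H * ∑ n ∈ Finset.Icc ⌈1 / τ⌉₊ (N - 1),
      (1 - 1 / (τ * (n : ℝ))) * (Nat.choose (N - 1) n : ℝ) * (1 - p) ^ n * p ^ (N - 1 - n))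
    (hC0 : 0 ≤ C) (hC : C < H * (1 - 1 / (τ * ((N : ℝ) - 1)))) :
    ∃ p ∈ Set.Icc (0 : ℝ) 1, F p = C := by
  set c : ℕ → ℝ := fun n => 1 - 1 / (τ * n)
  have hFeq (p : ℝ) : F p = H * binomialTailSum (N - 1) ⌈1 / τ⌉₊ c p := hF p
  have hcast : ((N - 1 : ℕ) : ℝ) = (N : ℝ) - 1 := by
    rw [Nat.cast_sub (by omega), Nat.cast_one]
  have hF1 : F 1 = 0 := by
    rw [hFeq, binomialTailSum_one c (one_le_natCeil_one_div hτpos), mul_zero]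
  have hF0 : F 0 = H * (1 - 1 / (τ * ((N : ℝ) - 1))) := by
    rw [hFeq, binomialTailSum_zero c (natCeil_one_div_le (by omega) (hcast ▸ hτ))]
    simp only [c, hcast]
  have hFcont : Continuous F := funext hFeq ▸ (continuous_binomialTailSum _ _ c).const_mul H
  exact intermediate_value_Icc' zero_le_one hFcont.continuousOn
    (show C ∈ Set.Icc (F 1) (F 0) by rw [hF1, hF0]; exact ⟨hC0, hC.le⟩)

/-- existence of a symmetric mixed Nash equilibrium:
if 0 ≤ C < H·(1 − 1/(τ(N−1))) then there is p* ∈ [0,1] with F(p*) = C. -/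
theorem stmt_6 (τ C H : ℝ) (hτpos : 0 < τ) (hH : 0 < H)
    (N : ℕ) (hN : 2 ≤ N) (hτ : 1 / ((N : ℝ) - 1) < τ)
    (F : ℝ → ℝ)
    (hF : ∀ p : ℝ, F p = H * ∑ n ∈ Finset.Icc ⌈1 / τ⌉₊ (N - 1),
      (1 - 1 / (τ * (n : ℝ))) * (Nat.choose (N - 1) n : ℝ) * (1 - p) ^ n * p ^ (N - 1 - n))
    (hC0 : 0 ≤ C) (hC : C < H * (1 - 1 / (τ * ((N : ℝ) - 1)))) :
    ∃ p ∈ Set.Icc (0 : ℝ) 1, F p = C :=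
  stmt_6_general τ C H hτpos N hN hτ F hF hC0 hC
end

section
/- Assume N ≥ 2, τ > 1/(N−1) and H > 0. Then the function F(p) = H·∑_{n=⌈1/τ⌉}^{N−1} (1 − 1/(τ·n))·binom(N−1, n)·(1−p)^n·p^{N−1−n} is strictly decreasing on [0,1]. Consequently, for each C there is at most one p ∈ [0,1] with F(p) = C, i.e. the symmetric mixed Nash equilibrium is unique. -/
/-!
Substituting `q = 1 - p`, the sum defining `F` is the Bernstein polynomial of degree `N - 1`
with coefficients `c n = 1 - 1/(τ n)` (and `c n = 0` below the threshold `τ n = 1`). The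
derivative of a Bernstein polynomial is `N - 1` times the Bernstein polynomial of degree `N - 2`
of the forward differences `c (n + 1) - c n`. These are nonnegative because `c` is monotone, and
they do not all vanish because `c 0 = 0 < c (N - 1)`, so the polynomial is strictly increasing
in `q` on `[0, 1]` and `F` strictly decreasing in `p`.
-/

open Finset Polynomial

section Bernstein

variable {R : Type*} [CommRing R]

theorem derivative_sum_C_mul_bernsteinPolynomial (c : ℕ → R) (n : ℕ) :
    derivative (∑ ν ∈ range (n + 2), C (c ν) * bernsteinPolynomial R (n + 1) ν) =
      (n + 1) * ∑ ν ∈ range (n + 1), C (c (ν + 1) - c ν) * bernsteinPolynomial R n ν := by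
  have hshift : ∑ ν ∈ range (n + 1), C (c (ν + 1)) * bernsteinPolynomial R n (ν + 1) +
      C (c 0) * bernsteinPolynomial R n 0 =
        ∑ ν ∈ range (n + 1), C (c ν) * bernsteinPolynomial R n ν := by
    rw [← sum_range_succ' (fun ν => C (c ν) * bernsteinPolynomial R n ν), sum_range_succ,
      bernsteinPolynomial.eq_zero_of_lt R (Nat.lt_succ_self n), mul_zero, add_zero]
  simp only [derivative_sum, derivative_C_mul]
  rw [sum_range_succ', bernsteinPolynomial.derivative_zero, Nat.add_sub_cancel]
  simp only [bernsteinPolynomial.derivative_succ_aux, map_sub, sub_mul, sum_sub_distrib,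
    mul_sub, mul_left_comm _ ((n : R[X]) + 1), ← mul_sum]
  rw [← hshift]
  push_cast
  ring

theorem bernsteinPolynomial_eval_pos {n ν : ℕ} (h : ν ≤ n) {x : ℝ} (hx₀ : 0 < x) (hx₁ : x < 1) :
    0 < (bernsteinPolynomial ℝ n ν).eval x := by
  have : 0 < 1 - x := sub_pos.mpr hx₁
  simp only [bernsteinPolynomial, eval_mul, eval_pow, eval_sub, eval_one, eval_X, eval_natCast]
  have := Nat.choose_pos h
  positivity

theorem strictMonoOn_eval_sum_C_mul_bernsteinPolynomial {c : ℕ → ℝ} (hc : Monotone c) {n : ℕ}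
    (hc₀ : c 0 < c (n + 1)) :
    StrictMonoOn (fun x => (∑ ν ∈ range (n + 2), C (c ν) * bernsteinPolynomial ℝ (n + 1) ν).eval x)
      (Set.Icc 0 1) := by
  refine strictMonoOn_of_deriv_pos (convex_Icc 0 1) (Polynomial.continuousOn _) fun x hx => ?_
  rw [interior_Icc] at hx
  obtain ⟨j, hj, hjump⟩ : ∃ j ∈ range (n + 1), 0 < c (j + 1) - c j := by
    refine exists_lt_of_sum_lt ?_
    rwa [sum_const_zero, sum_range_sub c, sub_pos]
  have hdiff_pos : 0 < ∑ ν ∈ range (n + 1), (c (ν + 1) - c ν) * (bernsteinPolynomial ℝ n ν).eval x :=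
    sum_pos' (fun ν hν => mul_nonneg (sub_nonneg.mpr (hc ν.le_succ))
        (bernsteinPolynomial_eval_pos (Nat.lt_succ_iff.mp (mem_range.mp hν)) hx.1 hx.2).le)
      ⟨j, hj, mul_pos hjump
        (bernsteinPolynomial_eval_pos (Nat.lt_succ_iff.mp (mem_range.mp hj)) hx.1 hx.2)⟩
  rw [Polynomial.deriv, derivative_sum_C_mul_bernsteinPolynomial]
  simp only [eval_mul, eval_finsetSum, eval_C, eval_add, eval_natCast, eval_one]
  exact mul_pos (by positivity) hdiff_pos

end Bernstein

/-- The factor `1 - 1/(τ n)` of the sum defining `F`, set to `0` below the epidemic threshold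
`τ n = 1`; this encodes the summation range `n ≥ ⌈1/τ⌉`. -/
noncomputable def sisPrevalence (τ : ℝ) (n : ℕ) : ℝ :=
  if 1 ≤ τ * n then 1 - 1 / (τ * n) else 0

theorem sisPrevalence_zero (τ : ℝ) : sisPrevalence τ 0 = 0 := by
  simp [sisPrevalence]

theorem sisPrevalence_nonneg (τ : ℝ) (n : ℕ) : 0 ≤ sisPrevalence τ n := by
  unfold sisPrevalence
  split_ifs with h
  · exact sub_nonneg.mpr (div_le_one_of_le₀ h (by linarith))
  · rfl

theorem sisPrevalence_pos {τ : ℝ} {n : ℕ} (h : 1 < τ * n) : 0 < sisPrevalence τ n := by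
  rw [sisPrevalence, if_pos h.le]
  exact sub_pos.mpr ((div_lt_one (by linarith)).mpr h)

theorem monotone_sisPrevalence (τ : ℝ) : Monotone (sisPrevalence τ) := by
  refine monotone_nat_of_le_succ fun n => ?_
  by_cases h : 1 ≤ τ * n
  · have hτ : 0 ≤ τ := by
      by_contra! hτ
      nlinarith [(n.cast_nonneg : (0 : ℝ) ≤ n)]
    have hle : τ * n ≤ τ * (n + 1 : ℕ) := by gcongr; exact n.le_succ
    rw [sisPrevalence, sisPrevalence, if_pos h, if_pos (h.trans hle)]
    gcongr
  · rw [sisPrevalence, if_neg h]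
    exact sisPrevalence_nonneg τ (n + 1)

theorem sum_Icc_eq_eval_sum_sisPrevalence_mul_bernsteinPolynomial {τ : ℝ} (hτ : 0 < τ) (n : ℕ)
    (p : ℝ) :
    ∑ k ∈ Icc ⌈1 / τ⌉₊ n, (1 - 1 / (τ * k)) * (n.choose k : ℝ) * (1 - p) ^ k * p ^ (n - k) =
      (∑ k ∈ range (n + 1), C (sisPrevalence τ k) * bernsteinPolynomial ℝ n k).eval (1 - p) := by
  have hIcc : Icc ⌈1 / τ⌉₊ n = (range (n + 1)).filter fun k : ℕ => 1 ≤ τ * k := by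
    ext k
    simp only [mem_Icc, mem_filter, mem_range, Nat.ceil_le, div_le_iff₀' hτ]
    rw [Nat.lt_succ_iff, and_comm]
  simp only [eval_finsetSum, eval_mul, eval_C, bernsteinPolynomial, eval_pow, eval_sub, eval_one,
    eval_X, eval_natCast, sub_sub_cancel, sisPrevalence, ite_mul, zero_mul, sum_ite, sum_const_zero,
    add_zero, hIcc]
  exact sum_congr rfl fun k _ => by ring

/-- F is strictly decreasing on [0,1]; hence the symmetric mixed
Nash equilibrium (a p ∈ [0,1] with F(p) = C) is unique. -/
theorem stmt_7 (τ H : ℝ) (hτpos : 0 < τ) (hH : 0 < H)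
    (N : ℕ) (hN : 2 ≤ N) (hτ : 1 / ((N : ℝ) - 1) < τ)
    (F : ℝ → ℝ)
    (hF : ∀ p : ℝ, F p = H * ∑ n ∈ Finset.Icc ⌈1 / τ⌉₊ (N - 1),
      (1 - 1 / (τ * (n : ℝ))) * (Nat.choose (N - 1) n : ℝ) * (1 - p) ^ n * p ^ (N - 1 - n)) :
    StrictAntiOn F (Set.Icc (0 : ℝ) 1) ∧
    ∀ C : ℝ, ∀ p₁ ∈ Set.Icc (0 : ℝ) 1, ∀ p₂ ∈ Set.Icc (0 : ℝ) 1,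
      F p₁ = C → F p₂ = C → p₁ = p₂ := by
  obtain ⟨k, hk⟩ : ∃ k, N - 1 = k + 1 := ⟨N - 2, by omega⟩
  have hN₁ : (N : ℝ) - 1 = (k + 1 : ℕ) := by rw [← hk, Nat.cast_sub (by omega), Nat.cast_one]
  have hsupercritical : 1 < τ * (k + 1 : ℕ) := by
    rw [hN₁, div_lt_iff₀ (by positivity)] at hτ
    linarith
  have hmono := strictMonoOn_eval_sum_C_mul_bernsteinPolynomial (monotone_sisPrevalence τ)
    (sisPrevalence_zero τ ▸ sisPrevalence_pos hsupercritical)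
  have hanti : StrictAntiOn F (Set.Icc 0 1) := by
    intro p hp q hq hpq
    simp only [hF, hk, sum_Icc_eq_eval_sum_sisPrevalence_mul_bernsteinPolynomial hτpos]
    refine mul_lt_mul_of_pos_left (hmono ?_ ?_ (by linarith)) hH <;>
      constructor <;> linarith [hp.1, hp.2, hq.1, hq.2]
  exact ⟨hanti, fun C p₁ hp₁ p₂ hp₂ h₁ h₂ => hanti.injOn hp₁ hp₂ (h₁.trans h₂.symm)⟩
end

section
/- Assume N ≥ 2, τ(N−1) > 1, H > 0 and 0 < C < H·(1 − 1/(τ(N−1))). Then p̂* = 1 − H/(τ·(H−C)·(N−1)) lies in (0,1) and satisfies the indifference condition Ŝ(0, p̂*) = Ŝ(1, p̂*) = C; moreover the corresponding social cost equals N·Ŝ(p̂*, p̂*) = N·C. If instead C ≥ H·(1 − 1/(τ(N−1))), then p̂* = 0 is an equilibrium, i.e. Ŝ(0,0) ≤ Ŝ(1,0). -/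
/-!
Only the product `K = τ (N - 1)` matters. Writing `q = 1 - p` for the probability that another
node does not invest, the mean-field prevalence `1 - 1 / (K q)` equals `C / H` exactly when
`K q = H / (H - C)`, i.e. at `p = p̂*`. There the expected infection cost `H · (C / H)` of a
non-investing node equals the investment cost `C`, so every strategy `p'` costs exactly `C`.
When `C ≥ H (1 - 1 / K)`, not investing against non-investors costs `H (1 - 1 / K) ≤ C`.
-/

/-- Mean-field steady-state infection probability of an SIS epidemic whose effective
spreading rate times the number of infectious neighbours is `x`. -/
noncomputable def meanFieldPrevalence (x : ℝ) : ℝ := max 0 (1 - 1 / x)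

theorem meanFieldPrevalence_of_one_le {x : ℝ} (hx : 1 ≤ x) :
    meanFieldPrevalence x = 1 - 1 / x := by
  refine max_eq_right (sub_nonneg.mpr ?_)
  rw [div_le_one (by linarith)]
  exact hx

theorem meanFieldPrevalence_div_sub {C H : ℝ} (hC : 0 ≤ C) (hCH : C < H) :
    meanFieldPrevalence (H / (H - C)) = C / H := by
  have hH : 0 < H := hC.trans_lt hCH
  have hHC : 0 < H - C := sub_pos.mpr hCH
  rw [meanFieldPrevalence_of_one_le ((one_le_div hHC).mpr (by linarith)), one_div_div]
  field_simp
  ring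

/-- The paper's `Ŝ(p', p)`, with `K` standing for `τ (N - 1)`. -/
noncomputable def approxCost (K C H p' p : ℝ) : ℝ :=
  p' * C + (1 - p') * H * meanFieldPrevalence (K * (1 - p))

section

variable {K C H : ℝ}

theorem lt_of_lt_mul_one_sub_inv (hK : 1 < K) (hH : 0 < H) (hCH : C < H * (1 - 1 / K)) :
    C < H := by
  have : 0 < H * (1 / K) := by positivity
  linarith

theorem mixedEquilibrium_mem_Ioo (hK : 1 < K) (hH : 0 < H) (hCH : C < H * (1 - 1 / K)) :
    1 - H / (K * (H - C)) ∈ Set.Ioo 0 1 := by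
  have hK0 : 0 < K := one_pos.trans hK
  have hHC : 0 < H - C := sub_pos.mpr (lt_of_lt_mul_one_sub_inv hK hH hCH)
  have hH_lt : H < K * (H - C) := by
    have := mul_lt_mul_of_pos_left hCH hK0
    rw [mul_left_comm, mul_one_sub, mul_one_div_cancel hK0.ne'] at this
    linarith
  constructor
  · linarith [(div_lt_one (by positivity)).mpr hH_lt]
  · linarith [show 0 < H / (K * (H - C)) by positivity]

theorem approxCost_mixedEquilibrium (hK : 1 < K) (hC : 0 ≤ C) (hH : 0 < H)
    (hCH : C < H * (1 - 1 / K)) (p' : ℝ) :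
    approxCost K C H p' (1 - H / (K * (H - C))) = C := by
  have hHC : 0 < H - C := sub_pos.mpr (lt_of_lt_mul_one_sub_inv hK hH hCH)
  have hneighbours : K * (1 - (1 - H / (K * (H - C)))) = H / (H - C) := by
    field_simp
    ring
  rw [approxCost, hneighbours, meanFieldPrevalence_div_sub hC (sub_pos.mp hHC)]
  field_simp
  ring

theorem approxCost_zero_le_one_at_zero (hK : 1 ≤ K) (hCH : H * (1 - 1 / K) ≤ C) :
    approxCost K C H 0 0 ≤ approxCost K C H 1 0 := by
  simpa [approxCost, meanFieldPrevalence_of_one_le hK] using hCH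

end

theorem stmt_8_general (τ C H : ℝ) (hC : 0 < C) (hH : 0 < H)
    (N : ℕ) (hτ : 1 < τ * ((N : ℝ) - 1))
    (Shat : ℝ → ℝ → ℝ)
    (hShat : ∀ p' p : ℝ, Shat p' p =
      p' * C + (1 - p') * H * max 0 (1 - 1 / (τ * (1 - p) * ((N : ℝ) - 1)))) :
    (C < H * (1 - 1 / (τ * ((N : ℝ) - 1))) →
      (0 < 1 - H / (τ * (H - C) * ((N : ℝ) - 1)) ∧
       1 - H / (τ * (H - C) * ((N : ℝ) - 1)) < 1) ∧
      Shat 0 (1 - H / (τ * (H - C) * ((N : ℝ) - 1))) = C ∧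
      Shat 1 (1 - H / (τ * (H - C) * ((N : ℝ) - 1))) = C ∧
      (N : ℝ) * Shat (1 - H / (τ * (H - C) * ((N : ℝ) - 1)))
        (1 - H / (τ * (H - C) * ((N : ℝ) - 1))) = (N : ℝ) * C) ∧
    (H * (1 - 1 / (τ * ((N : ℝ) - 1))) ≤ C → Shat 0 0 ≤ Shat 1 0) := by
  set K := τ * ((N : ℝ) - 1)
  have hShat_eq : Shat = approxCost K C H := by
    ext p' p
    rw [hShat, approxCost, meanFieldPrevalence, mul_right_comm τ]
  have hK_comm : τ * (H - C) * ((N : ℝ) - 1) = K * (H - C) := by ring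
  rw [hShat_eq, hK_comm]
  refine ⟨fun hCH => ?_, approxCost_zero_le_one_at_zero hτ.le⟩
  have hcost := approxCost_mixedEquilibrium hτ hC.le hH hCH
  exact ⟨mixedEquilibrium_mem_Ioo hτ hH hCH, hcost 0, hcost 1, by rw [hcost]⟩

/-- the approximate symmetric mixed equilibrium. If
C < H·(1 − 1/(τ(N−1))) then p̂* = 1 − H/(τ(H−C)(N−1)) lies in (0,1), satisfies the
indifference condition Ŝ(0,p̂*) = Ŝ(1,p̂*) = C, and the social cost is N·Ŝ(p̂*,p̂*) = N·C.
If C ≥ H·(1 − 1/(τ(N−1))), then p̂* = 0 is an equilibrium: Ŝ(0,0) ≤ Ŝ(1,0). -/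
theorem stmt_8 (τ C H : ℝ) (hC : 0 < C) (hH : 0 < H)
    (N : ℕ) (hN : 2 ≤ N) (hτ : 1 < τ * ((N : ℝ) - 1)) (hτpos : 0 < τ)
    (Shat : ℝ → ℝ → ℝ)
    (hShat : ∀ p' p : ℝ, Shat p' p =
      p' * C + (1 - p') * H * max 0 (1 - 1 / (τ * (1 - p) * ((N : ℝ) - 1)))) :
    (C < H * (1 - 1 / (τ * ((N : ℝ) - 1))) →
      (0 < 1 - H / (τ * (H - C) * ((N : ℝ) - 1)) ∧
       1 - H / (τ * (H - C) * ((N : ℝ) - 1)) < 1) ∧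
      Shat 0 (1 - H / (τ * (H - C) * ((N : ℝ) - 1))) = C ∧
      Shat 1 (1 - H / (τ * (H - C) * ((N : ℝ) - 1))) = C ∧
      (N : ℝ) * Shat (1 - H / (τ * (H - C) * ((N : ℝ) - 1)))
        (1 - H / (τ * (H - C) * ((N : ℝ) - 1))) = (N : ℝ) * C) ∧
    (H * (1 - 1 / (τ * ((N : ℝ) - 1))) ≤ C → Shat 0 0 ≤ Shat 1 0) :=
  stmt_8_general τ C H hC hH N hτ Shat hShat
end

section
/- Assume N ≥ 2, τ(N−1) > 1, C > 0 and H > 0. Then the minimum over p ∈ [0,1] of the approximate social cost N·( p·C + (1−p)·H·max{0, 1 − 1/(τ·(1−p)·(N−1))} ) equals N·min{C, H}·(1 − 1/(τ(N−1))); the minimum is attained at p = 0 if C > H, at every p ∈ [0, 1 − 1/(τ(N−1))] if C = H, and at p = 1 − 1/(τ(N−1)) if C < H. -/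
/-! With `A = τ(N-1)` and `q = 1 - 1/A`, the infection term simplifies to
`(1-p)·max{0, 1 - 1/(A(1-p))} = max{0, q - p}`, so the cost per node is the convex
piecewise-linear function `p·C + H·max{0, q - p}`. It is at least `min{C,H}·(p + max{0, q - p})
≥ min{C,H}·q`, with equality exactly at the points listed. -/

lemma one_sub_mul_max_zero_one_sub_inv {A p : ℝ} (hA : 0 < A) (hp : p ≤ 1) :
    (1 - p) * max 0 (1 - 1 / (A * (1 - p))) = max 0 (1 - 1 / A - p) := by
  rcases hp.eq_or_lt with rfl | hp
  · simp [hA.le]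
  · have hp' : 0 < 1 - p := sub_pos.mpr hp
    rw [mul_max_of_nonneg _ _ hp'.le, mul_zero]
    congr 1
    field_simp
    ring

lemma min_mul_le_mul_add_mul_max {C H p q : ℝ} (hC : 0 ≤ C) (hH : 0 ≤ H) (hp : 0 ≤ p) :
    min C H * q ≤ p * C + H * max 0 (q - p) :=
  calc min C H * q ≤ min C H * (p + max 0 (q - p)) := by
        gcongr
        linarith [le_max_right 0 (q - p)]
    _ ≤ p * C + H * max 0 (q - p) := by
        rw [mul_add, mul_comm]
        gcongr
        · exact min_le_left C H
        · exact min_le_right C H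

theorem stmt_9_general (τ C H : ℝ) (hC : 0 < C) (hH : 0 < H)
    (N : ℕ) (hτ : 1 < τ * ((N : ℝ) - 1))
    (g : ℝ → ℝ)
    (hg : ∀ p : ℝ, g p = (N : ℝ) *
      (p * C + (1 - p) * H * max 0 (1 - 1 / (τ * (1 - p) * ((N : ℝ) - 1))))) :
    (∀ p ∈ Set.Icc (0 : ℝ) 1,
      (N : ℝ) * min C H * (1 - 1 / (τ * ((N : ℝ) - 1))) ≤ g p) ∧
    (H < C → g 0 = (N : ℝ) * min C H * (1 - 1 / (τ * ((N : ℝ) - 1)))) ∧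
    (C = H → ∀ p ∈ Set.Icc (0 : ℝ) (1 - 1 / (τ * ((N : ℝ) - 1))),
      g p = (N : ℝ) * min C H * (1 - 1 / (τ * ((N : ℝ) - 1)))) ∧
    (C < H → g (1 - 1 / (τ * ((N : ℝ) - 1))) =
      (N : ℝ) * min C H * (1 - 1 / (τ * ((N : ℝ) - 1)))) := by
  set A := τ * ((N : ℝ) - 1) with hA
  set q := 1 - 1 / A
  have hA0 : 0 < A := by linarith
  have hq0 : 0 ≤ q := by
    have : 1 / A < 1 := (div_lt_one hA0).mpr hτ
    linarith
  have hq1 : q ≤ 1 := by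
    have : 0 < 1 / A := by positivity
    linarith
  have hcost : ∀ p ≤ 1, g p = N * (p * C + H * max 0 (q - p)) := fun p hp => by
    rw [hg, ← one_sub_mul_max_zero_one_sub_inv hA0 hp, hA]
    ring_nf
  refine ⟨fun p ⟨hp0, hp1⟩ => ?_, fun hHC => ?_, fun hCH p ⟨hp0, hpq⟩ => ?_, fun hCH => ?_⟩
  · rw [hcost p hp1, mul_assoc]
    exact mul_le_mul_of_nonneg_left (min_mul_le_mul_add_mul_max hC.le hH.le hp0) (Nat.cast_nonneg N)
  · rw [hcost 0 zero_le_one, min_eq_right hHC.le, max_eq_right (by linarith)]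
    ring
  · rw [hcost p (hpq.trans hq1), hCH, min_self, max_eq_right (by linarith)]
    ring
  · rw [hcost q hq1, min_eq_left hCH.le, sub_self, max_self]
    ring

/-- the minimum over p ∈ [0,1] of the approximate social cost equals
N·min{C,H}·(1 − 1/(τ(N−1))), attained at p = 0 if C > H, at every
p ∈ [0, 1 − 1/(τ(N−1))] if C = H, and at p = 1 − 1/(τ(N−1)) if C < H. -/
theorem stmt_9 (τ C H : ℝ) (hC : 0 < C) (hH : 0 < H)
    (N : ℕ) (hN : 2 ≤ N) (hτ : 1 < τ * ((N : ℝ) - 1)) (hτpos : 0 < τ)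
    (g : ℝ → ℝ)
    (hg : ∀ p : ℝ, g p = (N : ℝ) *
      (p * C + (1 - p) * H * max 0 (1 - 1 / (τ * (1 - p) * ((N : ℝ) - 1))))) :
    (∀ p ∈ Set.Icc (0 : ℝ) 1,
      (N : ℝ) * min C H * (1 - 1 / (τ * ((N : ℝ) - 1))) ≤ g p) ∧
    (H < C → g 0 = (N : ℝ) * min C H * (1 - 1 / (τ * ((N : ℝ) - 1)))) ∧
    (C = H → ∀ p ∈ Set.Icc (0 : ℝ) (1 - 1 / (τ * ((N : ℝ) - 1))),
      g p = (N : ℝ) * min C H * (1 - 1 / (τ * ((N : ℝ) - 1)))) ∧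
    (C < H → g (1 - 1 / (τ * ((N : ℝ) - 1))) =
      (N : ℝ) * min C H * (1 - 1 / (τ * ((N : ℝ) - 1)))) :=
  stmt_9_general τ C H hC hH N hτ g hg
end

section
/- Let 0 < q = C/H < 1 and τ > 0. If positive integers n, m₁ and n, m₂ are such that both (n, m₁) and (n, m₂) are Nash equilibrium pairs above the epidemic threshold (τ²·n·mᵢ > 1), then m₁ = m₂; symmetrically, for a given m* there is at most one n* such that (n*, m*) is a Nash equilibrium. (Equivalently, the equilibrium conditions force m = ⌈1/(τ(τ·n·(1−q) − q))⌉ − 1.) -/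
/-!
Above the epidemic threshold, `v_ℳ(n, m) = (τ n - 1 / (τ m)) / (τ n + 1)` is positive and increases
with `m`, and below it `v_ℳ` vanishes, so `m ↦ v_ℳ(n, m)` is monotone. A monotone sequence crosses a level `q`
(`v m < q ≤ v (m + 1)`) at most once, which pins down `m*`; the same argument for `v_𝒩` pins
down `n*`.
-/

noncomputable def steadyStateInfection (τ x y : ℝ) : ℝ :=
  if 1 < τ ^ 2 * x * y then (τ ^ 2 * x * y - 1) / (τ * x * (τ * y + 1)) else 0

lemma pos_of_one_lt_sq_mul_mul {τ x y : ℝ} (hy : 0 ≤ y) (h : 1 < τ ^ 2 * x * y) : 0 < x := by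
  by_contra! hx
  nlinarith [mul_nonpos_of_nonpos_of_nonneg (mul_nonpos_of_nonneg_of_nonpos (sq_nonneg τ) hx) hy]

lemma steadyStateInfection_monotone {τ y : ℝ} (hτ : 0 < τ) (hy : 0 ≤ y) :
    Monotone fun x => steadyStateInfection τ x y := by
  intro x x' hxx'
  simp only [steadyStateInfection]
  by_cases hx : 1 < τ ^ 2 * x * y
  · have hxpos : 0 < x := pos_of_one_lt_sq_mul_mul hy hx
    have hx'pos : 0 < x' := hxpos.trans_le hxx'
    have hx' : 1 < τ ^ 2 * x' * y := by nlinarith [mul_nonneg (sq_nonneg τ) hy]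
    rw [if_pos hx, if_pos hx', div_le_div_iff₀ (by positivity) (by positivity)]
    nlinarith [mul_pos hτ (add_pos_of_nonneg_of_pos (mul_nonneg hτ.le hy) one_pos)]
  · rw [if_neg hx]
    split_ifs with hx'
    · have hx'pos : 0 < x' := pos_of_one_lt_sq_mul_mul hy hx'
      exact div_nonneg (by linarith) (by positivity)
    · exact le_rfl

lemma Monotone.eq_of_lt_of_le_succ {α : Type*} [Preorder α] {v : ℕ → α} (hv : Monotone v)
    {q : α} {a b : ℕ} (ha : v a < q) (ha' : q ≤ v (a + 1)) (hb : v b < q) (hb' : q ≤ v (b + 1)) :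
    a = b := by
  rcases lt_trichotomy a b with h | h | h
  · exact absurd (ha'.trans (hv h)) hb.not_ge
  · exact h
  · exact absurd (hb'.trans (hv h)) ha.not_ge

theorem stmt_10_general (τ q : ℝ) (hτ : 0 < τ)
    (vM vN : ℕ → ℕ → ℝ)
    (hvM : ∀ n m : ℕ, vM n m = if 1 < τ ^ 2 * (m : ℝ) * (n : ℝ)
      then (τ ^ 2 * (m : ℝ) * (n : ℝ) - 1) / (τ * (m : ℝ) * (τ * (n : ℝ) + 1)) else 0)
    (hvN : ∀ n m : ℕ, vN n m = if 1 < τ ^ 2 * (m : ℝ) * (n : ℝ)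
      then (τ ^ 2 * (m : ℝ) * (n : ℝ) - 1) / (τ * (n : ℝ) * (τ * (m : ℝ) + 1)) else 0)
    (NashEq : ℕ → ℕ → Prop)
    (hNashEq : ∀ n m : ℕ, NashEq n m ↔
      (vM n m < q ∧ q ≤ vM n (m + 1) ∧ vN n m < q ∧ q ≤ vN (n + 1) m)) :
    (∀ n m₁ m₂ : ℕ, 0 < n → 0 < m₁ → 0 < m₂ →
      1 < τ ^ 2 * (n : ℝ) * (m₁ : ℝ) → 1 < τ ^ 2 * (n : ℝ) * (m₂ : ℝ) →
      NashEq n m₁ → NashEq n m₂ → m₁ = m₂) ∧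
    (∀ m n₁ n₂ : ℕ, 0 < m → 0 < n₁ → 0 < n₂ →
      1 < τ ^ 2 * (n₁ : ℝ) * (m : ℝ) → 1 < τ ^ 2 * (n₂ : ℝ) * (m : ℝ) →
      NashEq n₁ m → NashEq n₂ m → n₁ = n₂) := by
  have hvM_mono (n : ℕ) : Monotone (vM n) := by
    have h : vM n = fun m : ℕ => steadyStateInfection τ m n := funext (hvM n)
    exact h ▸ (steadyStateInfection_monotone hτ n.cast_nonneg).comp Nat.mono_cast
  have hvN_mono (m : ℕ) : Monotone (vN · m) := by
    have h : (vN · m) = fun n : ℕ => steadyStateInfection τ n m := by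
      funext n
      rw [hvN, steadyStateInfection, mul_right_comm _ (m : ℝ)]
    exact h ▸ (steadyStateInfection_monotone hτ m.cast_nonneg).comp Nat.mono_cast
  constructor
  · intro n m₁ m₂ _ _ _ _ _ h₁ h₂
    rw [hNashEq] at h₁ h₂
    exact (hvM_mono n).eq_of_lt_of_le_succ h₁.1 h₁.2.1 h₂.1 h₂.2.1
  · intro m n₁ n₂ _ _ _ _ _ h₁ h₂
    rw [hNashEq] at h₁ h₂
    exact (hvN_mono m).eq_of_lt_of_le_succ h₁.2.2.1 h₁.2.2.2 h₂.2.2.1 h₂.2.2.2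

/-- in the bipartite protection game, for a given n* there is at most
one m* such that (n*, m*) is a Nash equilibrium above the epidemic threshold,
and symmetrically for a given m* at most one n*. -/
theorem stmt_10 (τ q : ℝ) (hτ : 0 < τ) (hq0 : 0 < q) (hq1 : q < 1)
    (vM vN : ℕ → ℕ → ℝ)
    (hvM : ∀ n m : ℕ, vM n m = if 1 < τ ^ 2 * (m : ℝ) * (n : ℝ)
      then (τ ^ 2 * (m : ℝ) * (n : ℝ) - 1) / (τ * (m : ℝ) * (τ * (n : ℝ) + 1)) else 0)
    (hvN : ∀ n m : ℕ, vN n m = if 1 < τ ^ 2 * (m : ℝ) * (n : ℝ)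
      then (τ ^ 2 * (m : ℝ) * (n : ℝ) - 1) / (τ * (n : ℝ) * (τ * (m : ℝ) + 1)) else 0)
    (NashEq : ℕ → ℕ → Prop)
    (hNashEq : ∀ n m : ℕ, NashEq n m ↔
      (vM n m < q ∧ q ≤ vM n (m + 1) ∧ vN n m < q ∧ q ≤ vN (n + 1) m)) :
    (∀ n m₁ m₂ : ℕ, 0 < n → 0 < m₁ → 0 < m₂ →
      1 < τ ^ 2 * (n : ℝ) * (m₁ : ℝ) → 1 < τ ^ 2 * (n : ℝ) * (m₂ : ℝ) →
      NashEq n m₁ → NashEq n m₂ → m₁ = m₂) ∧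
    (∀ m n₁ n₂ : ℕ, 0 < m → 0 < n₁ → 0 < n₂ →
      1 < τ ^ 2 * (n₁ : ℝ) * (m : ℝ) → 1 < τ ^ 2 * (n₂ : ℝ) * (m : ℝ) →
      NashEq n₁ m → NashEq n₂ m → n₁ = n₂) :=
  stmt_10_general τ q hτ vM vN hvM hvN NashEq hNashEq
end

section
/- Let 0 < q = C/H < 1 and τ > 0, and suppose the positive integers (n*, m*) form a Nash equilibrium pair above the epidemic threshold (τ²·n*·m* > 1). If q ≥ 1/2, or if q < 1/2 and τ ≥ (1+q)(1−2q)/(2q(1−q)), then |n* − m*| ≤ 1; that is, n* and m* are equal or consecutive integers. -/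
/-!
Write `v(a, b) = (τ²ab - 1) / (τa(τb + 1))` for the infection probability of a node in a
cluster with `a` non-investors facing `b` non-investors in the other cluster. The sign of
`v - q` is that of the polynomial `(1 - q)τ²ab - qτa - 1`, so the equilibrium conditions are
polynomial and symmetric in the two clusters. If `n ≥ m + 2`, subtracting the conditions for an
extra non-investor in `𝒩` and for the current `ℳ` gives `(1 - q)τm > 3q`; fed into the `𝒩`
condition this bounds `2qτn < 1`, and the `ℳ` condition with one more non-investor then gives
`(1 - q)τn > 3q`.
Together these force `6q² < 1 - q` and `4qτ < 1`, i.e. `τ` lies below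
`(1 + q)(1 - 2q) / (2q(1 - q))`, which the hypothesis excludes.
-/

/-- `τa(τb + 1) · (v(a, b) - q)`. -/
def payoffGap (τ q a b : ℝ) : ℝ := (1 - q) * τ ^ 2 * a * b - q * τ * a - 1

lemma le_div_iff_payoffGap_nonneg {τ q a b : ℝ} (hτ : 0 < τ) (ha : 0 < a) (hb : 0 ≤ b) :
    q ≤ (τ ^ 2 * a * b - 1) / (τ * a * (τ * b + 1)) ↔ 0 ≤ payoffGap τ q a b := by
  rw [le_div_iff₀ (by positivity), payoffGap, ← sub_nonneg]
  ring_nf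

lemma div_lt_iff_payoffGap_neg {τ q a b : ℝ} (hτ : 0 < τ) (ha : 0 < a) (hb : 0 ≤ b) :
    (τ ^ 2 * a * b - 1) / (τ * a * (τ * b + 1)) < q ↔ payoffGap τ q a b < 0 := by
  simpa only [not_le] using (le_div_iff_payoffGap_nonneg (q := q) hτ ha hb).not

/-- `n` and `m` are the numbers of non-investors in `𝒩` and `ℳ`. -/
def IsNashPair (τ q n m : ℝ) : Prop :=
  payoffGap τ q m n < 0 ∧ 0 ≤ payoffGap τ q (m + 1) n ∧
    payoffGap τ q n m < 0 ∧ 0 ≤ payoffGap τ q (n + 1) m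

namespace IsNashPair

variable {τ q n m : ℝ}

lemma symm (h : IsNashPair τ q n m) : IsNashPair τ q m n :=
  ⟨h.2.2.1, h.2.2.2, h.1, h.2.1⟩

lemma two_mul_mul_lt_one (h : IsNashPair τ q n m) (hτ : 0 < τ) (hm : 0 ≤ m)
    (hmn : m + 2 ≤ n) : 2 * q * (τ * n) < 1 := by
  obtain ⟨hM, -, hN, hN'⟩ := h
  unfold payoffGap at *
  have hτn : 0 < τ * n := by nlinarith
  have hdiff : τ * (3 * q) < τ * ((1 - q) * τ * m) := by nlinarith
  have hslope : 2 * q < (1 - q) * τ * m - q := by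
    linarith [lt_of_mul_lt_mul_left hdiff hτ.le]
  nlinarith [mul_lt_mul_of_pos_left hslope hτn]

lemma three_mul_lt (h : IsNashPair τ q n m) (hτ : 0 < τ) (hq : 0 < q) (hm : 0 ≤ m)
    (hmn : m + 2 ≤ n) : 3 * q < (1 - q) * (τ * n) := by
  have hsmall := h.two_mul_mul_lt_one hτ hm hmn
  obtain ⟨-, hM', -, -⟩ := h
  unfold payoffGap at hM'
  have hτm : 0 < τ * (m + 1) := by positivity
  have hmul : (3 * q) * (τ * (m + 1)) < (1 - q) * (τ * n) * (τ * (m + 1)) := by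
    have hmn' : 2 * q * τ * (m + 1) ≤ 2 * q * τ * n :=
      mul_le_mul_of_nonneg_left (by linarith) (by positivity)
    nlinarith
  exact lt_of_mul_lt_mul_right hmul hτm.le

lemma lt_critical (h : IsNashPair τ q n m) (hτ : 0 < τ) (hq : 0 < q) (hq1 : q < 1)
    (hm : 0 ≤ m) (hmn : m + 2 ≤ n) : τ < (1 + q) * (1 - 2 * q) / (2 * q * (1 - q)) := by
  have hsmall := h.two_mul_mul_lt_one hτ hm hmn
  have hlarge := h.three_mul_lt hτ hq hm hmn
  have hq_sq : 6 * q ^ 2 < 1 - q := by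
    nlinarith [mul_lt_mul_of_pos_left hlarge (by positivity : 0 < 2 * q)]
  have hτ_small : 4 * q * τ < 1 := by nlinarith
  rw [lt_div_iff₀ (by nlinarith)]
  nlinarith

end IsNashPair

theorem stmt_11_general (τ q : ℝ) (hτ : 0 < τ) (hq0 : 0 < q) (hq1 : q < 1)
    (vM vN : ℕ → ℕ → ℝ)
    (hvM : ∀ n m : ℕ, vM n m = if 1 < τ ^ 2 * (m : ℝ) * (n : ℝ)
      then (τ ^ 2 * (m : ℝ) * (n : ℝ) - 1) / (τ * (m : ℝ) * (τ * (n : ℝ) + 1)) else 0)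
    (hvN : ∀ n m : ℕ, vN n m = if 1 < τ ^ 2 * (m : ℝ) * (n : ℝ)
      then (τ ^ 2 * (m : ℝ) * (n : ℝ) - 1) / (τ * (n : ℝ) * (τ * (m : ℝ) + 1)) else 0)
    (nstar mstar : ℕ)
    (hthr : 1 < τ ^ 2 * (nstar : ℝ) * (mstar : ℝ))
    (hNash : vM nstar mstar < q ∧ q ≤ vM nstar (mstar + 1) ∧
             vN nstar mstar < q ∧ q ≤ vN (nstar + 1) mstar)
    (hcond : 1 / 2 ≤ q ∨ (q < 1 / 2 ∧ (1 + q) * (1 - 2 * q) / (2 * q * (1 - q)) ≤ τ)) :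
    |(nstar : ℤ) - (mstar : ℤ)| ≤ 1 := by
  have hn : (0 : ℝ) < nstar := Nat.cast_pos.mpr <| Nat.pos_of_ne_zero <| by
    rintro rfl; norm_num at hthr
  have hm : (0 : ℝ) < mstar := Nat.cast_pos.mpr <| Nat.pos_of_ne_zero <| by
    rintro rfl; norm_num at hthr
  have hthr' : 1 < τ ^ 2 * (mstar : ℝ) * nstar := by
    linarith [mul_right_comm (τ ^ 2) (nstar : ℝ) mstar]
  have hnash : IsNashPair τ q nstar mstar := by
    obtain ⟨hM, hM', hN, hN'⟩ := hNash
    rw [hvM, if_pos hthr'] at hM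
    rw [hvM, Nat.cast_succ, if_pos (by nlinarith)] at hM'
    rw [hvN, if_pos hthr', mul_right_comm (τ ^ 2)] at hN
    rw [hvN, Nat.cast_succ, if_pos (by nlinarith), mul_right_comm (τ ^ 2)] at hN'
    exact ⟨(div_lt_iff_payoffGap_neg hτ hm hn.le).mp hM,
      (le_div_iff_payoffGap_nonneg hτ (by positivity) hn.le).mp hM',
      (div_lt_iff_payoffGap_neg hτ hn hm.le).mp hN,
      (le_div_iff_payoffGap_nonneg hτ (by positivity) hm.le).mp hN'⟩
  have hcritical : (1 + q) * (1 - 2 * q) / (2 * q * (1 - q)) ≤ τ := by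
    rcases hcond with hq | ⟨-, hτq⟩
    · exact (div_nonpos_of_nonpos_of_nonneg (by nlinarith) (by nlinarith)).trans hτ.le
    · exact hτq
  by_contra! hfar
  rcases le_abs.mp (Int.add_one_le_iff.mpr hfar) with hgap | hgap
  · have hmn : (mstar : ℝ) + 2 ≤ nstar := by exact_mod_cast (by omega : mstar + 2 ≤ nstar)
    exact (hnash.lt_critical hτ hq0 hq1 hm.le hmn).not_ge hcritical
  · have hnm : (nstar : ℝ) + 2 ≤ mstar := by exact_mod_cast (by omega : nstar + 2 ≤ mstar)
    exact (hnash.symm.lt_critical hτ hq0 hq1 hn.le hnm).not_ge hcritical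

/-- at a Nash equilibrium (n*, m*) above the epidemic threshold, if
q ≥ 1/2, or if q < 1/2 and τ ≥ (1+q)(1−2q)/(2q(1−q)), then |n* − m*| ≤ 1. -/
theorem stmt_11 (τ q : ℝ) (hτ : 0 < τ) (hq0 : 0 < q) (hq1 : q < 1)
    (vM vN : ℕ → ℕ → ℝ)
    (hvM : ∀ n m : ℕ, vM n m = if 1 < τ ^ 2 * (m : ℝ) * (n : ℝ)
      then (τ ^ 2 * (m : ℝ) * (n : ℝ) - 1) / (τ * (m : ℝ) * (τ * (n : ℝ) + 1)) else 0)
    (hvN : ∀ n m : ℕ, vN n m = if 1 < τ ^ 2 * (m : ℝ) * (n : ℝ)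
      then (τ ^ 2 * (m : ℝ) * (n : ℝ) - 1) / (τ * (n : ℝ) * (τ * (m : ℝ) + 1)) else 0)
    (nstar mstar : ℕ) (hn : 0 < nstar) (hm : 0 < mstar)
    (hthr : 1 < τ ^ 2 * (nstar : ℝ) * (mstar : ℝ))
    (hNash : vM nstar mstar < q ∧ q ≤ vM nstar (mstar + 1) ∧
             vN nstar mstar < q ∧ q ≤ vN (nstar + 1) mstar)
    (hcond : 1 / 2 ≤ q ∨ (q < 1 / 2 ∧ (1 + q) * (1 - 2 * q) / (2 * q * (1 - q)) ≤ τ)) :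
    |(nstar : ℤ) - (mstar : ℤ)| ≤ 1 :=
  stmt_11_general τ q hτ hq0 hq1 vM vN hvM hvN nstar mstar hthr hNash hcond
end

section
/- Let τ > 0, C > 0, H > 0 and integers M, N ≥ 1 with τ²MN > 1. Suppose the integers 1 ≤ n* ≤ N and 1 ≤ m* ≤ M satisfy the equilibrium inequalities v_ℳ(n*, m*) < C/H and v_𝒩(n*, m*) < C/H. Then the equilibrium social cost satisfies S(n*, m*) < C·(N + M), and consequently the Price of Anarchy satisfies S(n*, m*)/min S ≤ τ(M+N) / ( (τ²MN − 1) · min{ 1/(τ·max{M, N}), H·(τ(M+N)+2)/(C·(τM+1)·(τN+1)) } ), where min S is the minimum social cost from the optimal-social-cost formula. -/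
/-!
At an equilibrium every non-investing node has infection probability below `C / H`, so the
expected infection cost `H · v` it pays is below the investment cost `C` it saves; hence the
equilibrium social cost is below the cost `C (N + M)` of everybody investing. Dividing by the
optimal social cost, which factors as `(τ²MN - 1) · (C / τ) · min {…}`, gives the bound on the
Price of Anarchy.
-/

lemma infection_cost_lt_investment_cost {C H n m a b : ℝ} (hH : 0 < H) (hn : 0 < n)
    (hm : 0 < m) (ha : a < C / H) (hb : b < C / H) :
    H * (n * a + m * b) < C * (n + m) :=
  calc H * (n * a + m * b) < H * (n * (C / H) + m * (C / H)) := by gcongr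
    _ = C * (n + m) := by field_simp

lemma min_div_eq_div_mul_min {τ C : ℝ} (hτ : 0 < τ) (hC : 0 < C) (H X Y Z W : ℝ) :
    min (C / (τ ^ 2 * X)) (H * Y / (τ * Z * W)) =
      C / τ * min (1 / (τ * X)) (H * Y / (C * Z * W)) := by
  rw [mul_min_of_nonneg _ _ (div_pos hC hτ).le]
  congr 1
  · rw [div_mul_div_comm, mul_one, ← mul_assoc, ← sq]
  · field_simp

theorem stmt_14_general (τ C H : ℝ) (hτ : 0 < τ) (hC : 0 < C) (hH : 0 < H)
    (M N : ℕ) (hthr : 1 < τ ^ 2 * (M : ℝ) * (N : ℝ))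
    (vM vN : ℕ → ℕ → ℝ)
    (S : ℕ → ℕ → ℝ)
    (hS : ∀ n m : ℕ, S n m = C * ((N : ℝ) - (n : ℝ) + (M : ℝ) - (m : ℝ)) +
      H * ((n : ℝ) * vN n m + (m : ℝ) * vM n m))
    (Smin : ℝ)
    (hSmin : Smin = max (τ ^ 2 * (M : ℝ) * (N : ℝ) - 1) 0 *
      min (C / (τ ^ 2 * max (M : ℝ) (N : ℝ)))
        (H * (τ * ((M : ℝ) + (N : ℝ)) + 2) / (τ * (τ * (M : ℝ) + 1) * (τ * (N : ℝ) + 1))))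
    (nstar mstar : ℕ) (hn1 : 1 ≤ nstar) (hm1 : 1 ≤ mstar)
    (heqM : vM nstar mstar < C / H) (heqN : vN nstar mstar < C / H) :
    S nstar mstar < C * ((N : ℝ) + (M : ℝ)) ∧
    S nstar mstar / Smin ≤ τ * ((M : ℝ) + (N : ℝ)) /
      ((τ ^ 2 * (M : ℝ) * (N : ℝ) - 1) *
        min (1 / (τ * max (M : ℝ) (N : ℝ)))
          (H * (τ * ((M : ℝ) + (N : ℝ)) + 2) / (C * (τ * (M : ℝ) + 1) * (τ * (N : ℝ) + 1)))) := by
  have hcost : S nstar mstar < C * ((N : ℝ) + (M : ℝ)) := by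
    have := infection_cost_lt_investment_cost hH (by exact_mod_cast hn1 : (0 : ℝ) < nstar)
      (by exact_mod_cast hm1 : (0 : ℝ) < mstar) heqN heqM
    rw [hS]
    linarith
  refine ⟨hcost, ?_⟩
  have hM : 0 < M := Nat.pos_of_ne_zero (by rintro rfl; norm_num at hthr)
  have hgap : 0 < τ ^ 2 * (M : ℝ) * (N : ℝ) - 1 := by linarith
  set μ := min (1 / (τ * max (M : ℝ) (N : ℝ)))
    (H * (τ * ((M : ℝ) + (N : ℝ)) + 2) / (C * (τ * (M : ℝ) + 1) * (τ * (N : ℝ) + 1)))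
  have hμ : 0 < μ := lt_min (by positivity) (by positivity)
  have hSmin' : Smin = (τ ^ 2 * (M : ℝ) * (N : ℝ) - 1) * (C / τ * μ) := by
    rw [hSmin, max_eq_left hgap.le, min_div_eq_div_mul_min hτ hC]
  calc S nstar mstar / Smin ≤ C * ((N : ℝ) + (M : ℝ)) / Smin := by
        gcongr
        rw [hSmin']
        positivity
    _ = τ * ((M : ℝ) + (N : ℝ)) / ((τ ^ 2 * (M : ℝ) * (N : ℝ) - 1) * μ) := by
        rw [hSmin']
        field_simp
        ring

/-- at an equilibrium (n*, m*) the social cost satisfies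
S(n*, m*) < C(N+M), and hence the Price of Anarchy is bounded by
τ(M+N)/((τ²MN − 1)·min{1/(τ·max{M,N}), H(τ(M+N)+2)/(C(τM+1)(τN+1))}). -/
theorem stmt_14 (τ C H : ℝ) (hτ : 0 < τ) (hC : 0 < C) (hH : 0 < H)
    (M N : ℕ) (hM : 1 ≤ M) (hN : 1 ≤ N) (hthr : 1 < τ ^ 2 * (M : ℝ) * (N : ℝ))
    (vM vN : ℕ → ℕ → ℝ)
    (hvM : ∀ n m : ℕ, vM n m = if 1 < τ ^ 2 * (m : ℝ) * (n : ℝ)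
      then (τ ^ 2 * (m : ℝ) * (n : ℝ) - 1) / (τ * (m : ℝ) * (τ * (n : ℝ) + 1)) else 0)
    (hvN : ∀ n m : ℕ, vN n m = if 1 < τ ^ 2 * (m : ℝ) * (n : ℝ)
      then (τ ^ 2 * (m : ℝ) * (n : ℝ) - 1) / (τ * (n : ℝ) * (τ * (m : ℝ) + 1)) else 0)
    (S : ℕ → ℕ → ℝ)
    (hS : ∀ n m : ℕ, S n m = C * ((N : ℝ) - (n : ℝ) + (M : ℝ) - (m : ℝ)) +
      H * ((n : ℝ) * vN n m + (m : ℝ) * vM n m))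
    (Smin : ℝ)
    (hSmin : Smin = max (τ ^ 2 * (M : ℝ) * (N : ℝ) - 1) 0 *
      min (C / (τ ^ 2 * max (M : ℝ) (N : ℝ)))
        (H * (τ * ((M : ℝ) + (N : ℝ)) + 2) / (τ * (τ * (M : ℝ) + 1) * (τ * (N : ℝ) + 1))))
    (nstar mstar : ℕ) (hn1 : 1 ≤ nstar) (hnN : nstar ≤ N) (hm1 : 1 ≤ mstar)
    (hmM : mstar ≤ M)
    (heqM : vM nstar mstar < C / H) (heqN : vN nstar mstar < C / H) :
    S nstar mstar < C * ((N : ℝ) + (M : ℝ)) ∧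
    S nstar mstar / Smin ≤ τ * ((M : ℝ) + (N : ℝ)) /
      ((τ ^ 2 * (M : ℝ) * (N : ℝ) - 1) *
        min (1 / (τ * max (M : ℝ) (N : ℝ)))
          (H * (τ * ((M : ℝ) + (N : ℝ)) + 2) / (C * (τ * (M : ℝ) + 1) * (τ * (N : ℝ) + 1)))) :=
  stmt_14_general τ C H hτ hC hH M N hthr vM vN S hS Smin hSmin nstar mstar hn1 hm1 heqM heqN
end

section
/- Let τ > 0 and let m, n > 0 be reals with τ²mn > 1. Then the pair v_ℳ = (τ²mn − 1)/(τ·m·(τn + 1)) and v_𝒩 = (τ²mn − 1)/(τ·n·(τm + 1)) satisfies the coupled steady-state NIMFA equations v_ℳ = 1 − 1/(1 + τ·n·v_𝒩) and v_𝒩 = 1 − 1/(1 + τ·m·v_ℳ), and both v_ℳ and v_𝒩 lie in the open interval (0, 1). -/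
/-! Writing `a = τn` and `b = τm`, swapping `a` and `b` exchanges the two cluster equations, and
`v(a, b) = (ab - 1)/(b(a + 1))` solves `v(a, b) = 1 - 1/(1 + a v(b, a))` since
`1 + a v(b, a) = b(a + 1)/(b + 1)`. It lies in `(0, 1)` because `0 < ab - 1 < ab + b`. -/

noncomputable def bipartiteSteadyState (a b : ℝ) : ℝ := (a * b - 1) / (b * (a + 1))

lemma bipartiteSteadyState_eq_one_sub {a b : ℝ} (ha : 0 < a) (hb : 0 < b) :
    bipartiteSteadyState a b = 1 - 1 / (1 + a * bipartiteSteadyState b a) := by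
  have hsum : 1 + a * bipartiteSteadyState b a = b * (a + 1) / (b + 1) := by
    unfold bipartiteSteadyState
    field_simp
    ring
  rw [hsum, one_div_div, bipartiteSteadyState]
  field_simp
  ring

lemma bipartiteSteadyState_mem_Ioo {a b : ℝ} (hb : 0 < b) (hab : 1 < a * b) :
    bipartiteSteadyState a b ∈ Set.Ioo 0 1 := by
  have ha : 0 < a := pos_of_mul_pos_left (one_pos.trans hab) hb.le
  have hden : 0 < b * (a + 1) := by positivity
  refine ⟨div_pos (by linarith) hden, (div_lt_one hden).2 ?_⟩
  linarith

/-- for τ > 0 and m, n > 0 with τ²mn > 1, the pair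
v_ℳ = (τ²mn − 1)/(τm(τn + 1)) and v_𝒩 = (τ²mn − 1)/(τn(τm + 1)) satisfies the
coupled steady-state NIMFA equations of the bipartite graph and lies in (0,1)². -/
theorem stmt_18 (τ m n : ℝ) (hτ : 0 < τ) (hm : 0 < m) (hn : 0 < n)
    (hthr : 1 < τ ^ 2 * m * n)
    (vM vN : ℝ)
    (hvM : vM = (τ ^ 2 * m * n - 1) / (τ * m * (τ * n + 1)))
    (hvN : vN = (τ ^ 2 * m * n - 1) / (τ * n * (τ * m + 1))) :
    vM = 1 - 1 / (1 + τ * n * vN) ∧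
    vN = 1 - 1 / (1 + τ * m * vM) ∧
    vM ∈ Set.Ioo (0 : ℝ) 1 ∧ vN ∈ Set.Ioo (0 : ℝ) 1 := by
  have hM : vM = bipartiteSteadyState (τ * n) (τ * m) := by
    rw [hvM, bipartiteSteadyState]; ring
  have hN : vN = bipartiteSteadyState (τ * m) (τ * n) := by
    rw [hvN, bipartiteSteadyState]; ring
  have hthr_nm : 1 < τ * n * (τ * m) := by linarith
  have hthr_mn : 1 < τ * m * (τ * n) := by linarith
  have hpos_m : 0 < τ * m := by positivity
  have hpos_n : 0 < τ * n := by positivity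
  subst hM hN
  exact ⟨bipartiteSteadyState_eq_one_sub hpos_n hpos_m,
    bipartiteSteadyState_eq_one_sub hpos_m hpos_n,
    bipartiteSteadyState_mem_Ioo hpos_m hthr_nm,
    bipartiteSteadyState_mem_Ioo hpos_n hthr_mn⟩
end
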